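/- Lower tail bound for the kNN random bandwidth (equation (exp1) in the proof of Theorem 1(b)): Let X_1,…,X_n be i.i.d. copies of a random element X of a Hilbert space 𝓗, fix x ∈ 𝓗 and θ ∈ 𝓗, and suppose φ_{x,θ} is continuous. Let ρ_n ∈ (0,1) and positive integers k_{1,n} ≤ k ≤ k_{2,n} ≤ n. Then P( H_{k,x,θ} ≤ φ_{x,θ}^{-1}(ρ_n k_{1,n}/n) ) ≤ exp( −(1−ρ_n)·k_{1,n}/4 ) + exp( −(1−ρ_n)²·k_{1,n}/(4ρ_n) ). -/

import Mathlib

open MeasureTheory ProbabilityTheory Filter Set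
open scoped ENNReal NNReal RealInnerProductSpace

noncomputable section

variable {H : Type*} [NormedAddCommGroup H] [InnerProductSpace ℝ H]
  [MeasurableSpace H] [BorelSpace H] [SecondCountableTopology H]
variable {Ω : Type*} [MeasureSpace Ω]

/-- The semi-metric `d_θ(x₁,x₂) = |⟨θ, x₁ − x₂⟩|`. -/
def dsm (θ x₁ x₂ : H) : ℝ := |⟪θ, x₁ - x₂⟫|

/-- Small-ball probability `φ_{x,θ}(h) = P(d_θ(X,x) ≤ h)`. -/
def phiSB (X : ℕ → Ω → H) (x θ : H) (h : ℝ) : ℝ :=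
  (ℙ {ω | dsm θ (X 0 ω) x ≤ h}).toReal

/-- Generalized inverse `φ_{x,θ}^{-1}(u) = inf{h > 0 : φ_{x,θ}(h) ≥ u}`. -/
def phiInv (X : ℕ → Ω → H) (x θ : H) (u : ℝ) : ℝ :=
  sInf {h : ℝ | 0 < h ∧ u ≤ phiSB X x θ h}

/-- Generalized inverse `f^{-1}(u) = inf{h > 0 : f(h) ≥ u}` of a function `f`. -/
def fInv (f : ℝ → ℝ) (u : ℝ) : ℝ := sInf {h : ℝ | 0 < h ∧ u ≤ f h}

/-- The kernel estimator `r̂_{h,θ}(x)` computed from the first `n` observations. -/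
def rhat (X : ℕ → Ω → H) (Y : ℕ → Ω → ℝ) (K : ℝ → ℝ) (x : H) (n : ℕ)
    (hband : ℝ) (θ : H) (ω : Ω) : ℝ :=
  (∑ i ∈ Finset.range n, Y i ω * K (hband⁻¹ * dsm θ (X i ω) x)) /
    (∑ i ∈ Finset.range n, K (hband⁻¹ * dsm θ (X i ω) x))

/-- The kNN random bandwidth
`H_{k,x,θ} = min{h > 0 : Σ_{i=1}^n 1_{B_θ(x,h)}(X_i) = k}`. -/
def HkNN (X : ℕ → Ω → H) (x : H) (n k : ℕ) (θ : H) (ω : Ω) : ℝ :=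
  sInf {h : ℝ | 0 < h ∧
    (@Finset.filter _ (fun i => dsm θ (X i ω) x ≤ h) (Classical.decPred _)
      (Finset.range n)).card = k}

/-- The kNN estimator `r̂*_{k,θ}(x)`. -/
def rknn (X : ℕ → Ω → H) (Y : ℕ → Ω → ℝ) (K : ℝ → ℝ) (x : H) (n k : ℕ)
    (θ : H) (ω : Ω) : ℝ :=
  rhat X Y K x n (HkNN X x n k θ ω) θ ω

/-- Normalized empirical small-ball frequency
`F̂_{h,θ}(x) = (n φ_{x,θ}(h))⁻¹ Σ_{i=1}^n K(h⁻¹ d_θ(x,X_i))`. -/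
def Fhat (X : ℕ → Ω → H) (K : ℝ → ℝ) (x : H) (n : ℕ) (hband : ℝ) (θ : H)
    (ω : Ω) : ℝ :=
  (∑ i ∈ Finset.range n, K (hband⁻¹ * dsm θ (X i ω) x)) / (n * phiSB X x θ hband)

/-- Normalized response-weighted sum
`ĝ_{h,θ}(x) = (n φ_{x,θ}(h))⁻¹ Σ_{i=1}^n K(h⁻¹ d_θ(x,X_i)) Y_i`. -/
def ghat (X : ℕ → Ω → H) (Y : ℕ → Ω → ℝ) (K : ℝ → ℝ) (x : H) (n : ℕ)
    (hband : ℝ) (θ : H) (ω : Ω) : ℝ :=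
  (∑ i ∈ Finset.range n, K (hband⁻¹ * dsm θ (X i ω) x) * Y i ω) /
    (n * phiSB X x θ hband)

/-- The bias term `B̂_{h,θ}(x) = E(ĝ_{h,θ}(x)) / E(F̂_{h,θ}(x)) − r_{θ₀}(x)`. -/
def Bhat (X : ℕ → Ω → H) (Y : ℕ → Ω → ℝ) (K : ℝ → ℝ) (x : H) (r : ℝ → ℝ)
    (θ₀ : H) (n : ℕ) (hband : ℝ) (θ : H) : ℝ :=
  (∫ ω, ghat X Y K x n hband θ ω ∂ℙ) / (∫ ω, Fhat X K x n hband θ ω ∂ℙ) -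
    r ⟪θ₀, x⟫

/-- The minimal envelope function of a class of functions. -/
def envOf (𝓚 : Set (H → ℝ)) (z : H) : ℝ := ⨆ g : 𝓚, |(g : H → ℝ) z|

/-- `L²(Q)` norm. -/
def L2norm (Q : Measure H) (f : H → ℝ) : ℝ := (∫ z, (f z) ^ 2 ∂Q) ^ (1/2 : ℝ)

/-- `L²(Q)` distance. -/
def distL2 (Q : Measure H) (f g : H → ℝ) : ℝ := L2norm Q (fun z => f z - g z)

/-- Covering number `N(ε, 𝓚, d_{Q,2})`: the minimal number of open `d_{Q,2}`-balls of
radius `ε` needed to cover `𝓚`. -/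
def covNum (ε : ℝ) (𝓚 : Set (H → ℝ)) (Q : Measure H) : ℕ∞ :=
  sInf {m : ℕ∞ | ∃ T : Finset (H → ℝ), (T.card : ℕ∞) = m ∧
    ∀ f ∈ 𝓚, ∃ g ∈ T, distL2 Q f g < ε}

/-- A pointwise measurable class of functions: a class of measurable functions containing
a countable subclass from which every member can be recovered as a pointwise limit. -/
def PtwiseMeasClass (𝓚 : Set (H → ℝ)) : Prop :=
  (∀ g ∈ 𝓚, Measurable g) ∧
    ∃ 𝓖 ⊆ 𝓚, 𝓖.Countable ∧ ∀ g ∈ 𝓚, ∃ u : ℕ → (H → ℝ), (∀ n, u n ∈ 𝓖) ∧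
      ∀ z, Tendsto (fun n => u n z) atTop (nhds (g z))

/-- The entropy-integral condition
`sup_Q ∫₀¹ √(1 + log N(ε‖F‖_{Q,2}, 𝓚, d_{Q,2})) dε < ∞`, the supremum running over all
probability measures `Q` on `H` with `‖F‖_{Q,2} < ∞`, `F` being the minimal envelope of `𝓚`. -/
def EntropyBound (𝓚 : Set (H → ℝ)) : Prop :=
  ∃ C : ℝ, ∀ Q : Measure H, IsProbabilityMeasure Q →
    Integrable (fun z => (envOf 𝓚 z) ^ 2) Q →
      (∀ ε ∈ Set.Ioc (0:ℝ) 1, covNum (ε * L2norm Q (envOf 𝓚)) 𝓚 Q < ⊤) ∧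
      ∫ ε in Set.Ioc (0:ℝ) 1,
        Real.sqrt (1 + Real.log ((covNum (ε * L2norm Q (envOf 𝓚)) 𝓚 Q).toNat)) ≤ C

/-- The class of kernel-based functions `𝓚_Θ = {z ↦ K(h⁻¹ d_θ(x,z)) : h > 0, θ ∈ Θ}`. -/
def Kclass (K : ℝ → ℝ) (x : H) (Θ : Set H) : Set (H → ℝ) :=
  {g | ∃ θ ∈ Θ, ∃ hband : ℝ, 0 < hband ∧ g = fun z => K (hband⁻¹ * dsm θ x z)}

/-!
Off a null event the distances `d_θ(X_i, x)`, `i < n`, are positive and pairwise distinct: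
`φ_{x,θ}` is continuous, so each distance has an atomless law, and two independent variables
one of which is atomless coincide with probability zero. On that event some radius carries
exactly `k` sample points, and `H_{k,x,θ} ≤ t` forces at least `k ≥ k₁` of them into
`B_θ(x, t)`. (Off it the set defining `H_{k,x,θ}` may be empty, and its infimum is then `0`.)
For `t = φ_{x,θ}^{-1}(ρ k₁ / n)` continuity gives `φ_{x,θ}(t) ≤ ρ k₁ / n`, so this count is a
sum of independent Bernoulli variables with mean at most `ρ k₁`, and Chernoff's bound
`exp(ρ k₁ (eᶜ - 1) - c k₁)` is at most one of the two exponentials for a suitable `c ≥ 0`.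
-/

theorem Finset.exists_card_filter_le_eq {α : Type*} [LinearOrder α] {s : Finset α} {k : ℕ}
    (hk₁ : 1 ≤ k) (hks : k ≤ s.card) : ∃ a ∈ s, {b ∈ s | b ≤ a}.card = k := by
  set rank : α → ℕ := fun a => {b ∈ s | b ≤ a}.card
  have hrank : StrictMonoOn rank s := by
    intro a ha a' ha' haa'
    refine Finset.card_lt_card <| (Finset.ssubset_iff_of_subset ?_).2 ⟨a', ?_, ?_⟩
    · exact Finset.monotone_filter_right s fun b _ hb => hb.trans haa'.le
    · simpa using ha'
    · simp [haa']
  have himage : s.image rank = Finset.Icc 1 s.card := by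
    refine Finset.eq_of_subset_of_card_le (fun r hr => ?_) ?_
    · obtain ⟨a, ha, rfl⟩ := Finset.mem_image.1 hr
      exact Finset.mem_Icc.2 ⟨Finset.card_pos.2 ⟨a, by simpa using ha⟩, Finset.card_filter_le _ _⟩
    · rw [Finset.card_image_of_injOn hrank.injOn, Nat.card_Icc, Nat.add_sub_cancel]
  have hk : k ∈ s.image rank := himage ▸ Finset.mem_Icc.2 ⟨hk₁, hks⟩
  simpa using hk

theorem Finset.exists_card_filter_apply_le_eq {ι α : Type*} [LinearOrder α] {s : Finset ι}
    {d : ι → α} (hinj : Set.InjOn d s) {k : ℕ} (hk₁ : 1 ≤ k) (hks : k ≤ s.card) :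
    ∃ i ∈ s, {j ∈ s | d j ≤ d i}.card = k := by
  classical
  rw [← Finset.card_image_of_injOn hinj] at hks
  obtain ⟨a, ha, hak⟩ := Finset.exists_card_filter_le_eq hk₁ hks
  obtain ⟨i, hi, rfl⟩ := Finset.mem_image.1 ha
  refine ⟨i, hi, ?_⟩
  rwa [Finset.filter_image,
    Finset.card_image_of_injOn (hinj.mono (Finset.filter_subset _ _))] at hak

theorem Finset.exists_lt_le_of_card_filter_lt {ι α : Type*} [LinearOrder α] {s : Finset ι}
    {d : ι → α} {t h : α} (hth : {i ∈ s | d i ≤ t}.card < {i ∈ s | d i ≤ h}.card) :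
    ∃ i ∈ s, t < d i ∧ d i ≤ h := by
  by_contra! hnot
  refine hth.not_ge (Finset.card_le_card fun i hi => ?_)
  rw [Finset.mem_filter] at hi ⊢
  exact ⟨hi.1, not_lt.1 fun hti => (hnot i hi.1 hti).not_ge hi.2⟩

theorem Finset.le_card_filter_of_sInf_le {ι : Type*} {s : Finset ι} {d : ι → ℝ} {k : ℕ} {t : ℝ}
    (hd : ∀ i ∈ s, 0 < d i) (hinj : Set.InjOn d s) (hk₁ : 1 ≤ k) (hks : k ≤ s.card)
    (ht : sInf {h | 0 < h ∧ {i ∈ s | d i ≤ h}.card = k} ≤ t) :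
    k ≤ {i ∈ s | d i ≤ t}.card := by
  set S := {h | 0 < h ∧ {i ∈ s | d i ≤ h}.card = k}
  by_contra! hlt
  obtain ⟨i₁, hi₁, hcard⟩ := Finset.exists_card_filter_apply_le_eq hinj hk₁ hks
  have hS : S.Nonempty := ⟨d i₁, hd i₁ hi₁, hcard⟩
  obtain ⟨i₀, hi₀, hti₀, -⟩ := Finset.exists_lt_le_of_card_filter_lt (hcard ▸ hlt)
  -- every radius in `S` reaches the nearest point `d j` beyond `t`, and so does `sInf S`
  obtain ⟨j, hj, hj_min⟩ := Finset.exists_min_image {i ∈ s | t < d i} d ⟨i₀, by simp [hi₀, hti₀]⟩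
  obtain ⟨h, hhS, hhj⟩ := exists_lt_of_csInf_lt hS (ht.trans_lt (Finset.mem_filter.1 hj).2)
  obtain ⟨i, hi, hti, hih⟩ := Finset.exists_lt_le_of_card_filter_lt (hhS.2 ▸ hlt)
  exact (hih.trans_lt hhj).not_ge (hj_min i (by simp [hi, hti]))

open Topology in
theorem apply_fInv_le {f : ℝ → ℝ} {u : ℝ} (hf : Continuous f) (h0 : f 0 ≤ u) :
    f (fInv f u) ≤ u := by
  set t := fInv f u
  have ht : 0 ≤ t := Real.sInf_nonneg fun h hh => hh.1.le
  by_contra! hlt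
  rcases ht.eq_or_lt with h | htpos
  · exact hlt.not_ge (h ▸ h0)
  have hev : ∀ᶠ h in 𝓝[<] t, 0 < h ∧ u < f h :=
    nhdsWithin_le_nhds ((lt_mem_nhds htpos).and (hf.continuousAt.eventually (lt_mem_nhds hlt)))
  obtain ⟨h, ⟨hpos, hu⟩, hht⟩ := (hev.and self_mem_nhdsWithin).exists
  exact (hht : h < t).not_ge (csInf_le ⟨0, fun h hh => hh.1.le⟩ ⟨hpos, hu.le⟩)

section Probability

variable {Ω : Type*} {mΩ : MeasurableSpace Ω} {μ : Measure Ω}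

theorem measure_eq_zero_of_continuous_cdf [IsProbabilityMeasure μ] {f : Ω → ℝ}
    (hf : Measurable f) (hcont : Continuous fun h => μ.real {ω | f ω ≤ h}) (c : ℝ) :
    μ {ω | f ω = c} = 0 := by
  have := Measure.isProbabilityMeasure_map (μ := μ) hf.aemeasurable
  have hcdf : cdf (μ.map f) = fun h => μ.real {ω | f ω ≤ h} := by
    ext h
    rw [cdf_eq_real, map_measureReal_apply hf measurableSet_Iic]
    rfl
  have hleft : Function.leftLim (cdf (μ.map f)) c = cdf (μ.map f) c :=
    (monotone_cdf _).continuousWithinAt_Iio_iff_leftLim_eq.1 (hcdf ▸ hcont.continuousWithinAt)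
  calc μ {ω | f ω = c} = μ.map f {c} := (Measure.map_apply hf (measurableSet_singleton c)).symm
    _ = (cdf (μ.map f)).measure {c} := by rw [measure_cdf]
    _ = 0 := by rw [StieltjesFunction.measure_singleton, hleft, sub_self, ENNReal.ofReal_zero]

theorem ProbabilityTheory.IndepFun.measure_eq_eq_zero [IsFiniteMeasure μ] {f g : Ω → ℝ}
    (hfg : IndepFun f g μ) (hf : Measurable f) (hg : Measurable g)
    (hg_atom : ∀ c, μ {ω | g ω = c} = 0) :
    μ {ω | f ω = g ω} = 0 := by
  have hdiag : MeasurableSet {p : ℝ × ℝ | p.1 = p.2} := measurableSet_diagonal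
  have hslice : ∀ a, μ.map g (Prod.mk a ⁻¹' {p : ℝ × ℝ | p.1 = p.2}) = 0 := fun a => by
    have : Prod.mk a ⁻¹' {p : ℝ × ℝ | p.1 = p.2} = {a} := by ext; simp [eq_comm]
    rw [this, Measure.map_apply hg (measurableSet_singleton a)]
    exact hg_atom a
  calc μ {ω | f ω = g ω} = μ.map (fun ω => (f ω, g ω)) {p | p.1 = p.2} :=
        (Measure.map_apply (hf.prodMk hg) hdiag).symm
    _ = ((μ.map f).prod (μ.map g)) {p | p.1 = p.2} := by
        rw [(indepFun_iff_map_prod_eq_prod_map_map hf.aemeasurable hg.aemeasurable).1 hfg]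
    _ = 0 := by rw [Measure.prod_apply hdiag, lintegral_congr fun a => hslice a, lintegral_zero]

theorem ProbabilityTheory.iIndepFun.ae_injective {ι : Type*} [Countable ι] {d : ι → Ω → ℝ}
    (hind : iIndepFun d μ) (hd : ∀ i, Measurable (d i)) (hatom : ∀ i c, μ {ω | d i ω = c} = 0) :
    ∀ᵐ ω ∂μ, Function.Injective fun i => d i ω := by
  have := hind.isProbabilityMeasure
  have hpair : ∀ i j, ∀ᵐ ω ∂μ, d i ω = d j ω → i = j := fun i j => by
    by_cases hij : i = j
    · simp [hij]
    · filter_upwards [measure_eq_zero_iff_ae_notMem.1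
        ((hind.indepFun hij).measure_eq_eq_zero (hd i) (hd j) (hatom j))] with ω hω heq
      exact absurd heq hω
  filter_upwards [ae_all_iff.2 fun i => ae_all_iff.2 (hpair i)] with ω hω i j using hω i j

theorem ProbabilityTheory.iIndepFun.iIndepSet_preimage {ι β : Type*} [MeasurableSpace β]
    {f : ι → Ω → β} (hind : iIndepFun f μ) (hf : ∀ i, Measurable (f i)) {B : Set β}
    (hB : MeasurableSet B) : iIndepSet (fun i => f i ⁻¹' B) μ :=
  (iIndepSet_iff_meas_biInter fun i => hf i hB).2 fun s =>
    hind.measure_inter_preimage_eq_mul s fun _ _ => hB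

theorem exp_mul_indicator_one (A : Set Ω) (c : ℝ) (ω : Ω) :
    Real.exp (c * A.indicator (fun _ => 1) ω) = A.indicator (fun _ => Real.exp c - 1) ω + 1 := by
  by_cases hω : ω ∈ A <;> simp [hω]

theorem mgf_indicator_one [IsProbabilityMeasure μ] {A : Set Ω} (hA : MeasurableSet A) (c : ℝ) :
    mgf (A.indicator fun _ => 1) μ c = 1 + μ.real A * (Real.exp c - 1) := by
  simp_rw [mgf, exp_mul_indicator_one]
  rw [integral_add ((integrable_const _).indicator hA) (integrable_const _),
    integral_indicator_const _ hA]
  simp [add_comm, mul_comm]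

open Classical in
theorem measureReal_le_card_filter_mem_le {ι : Type*} {A : ι → Set Ω}
    (hA : ∀ i, MeasurableSet (A i)) (hind : iIndepSet A μ) (s : Finset ι) {a c m : ℝ}
    (hc : 0 ≤ c) (hm : ∑ i ∈ s, μ.real (A i) ≤ m) :
    μ.real {ω | a ≤ {i ∈ s | ω ∈ A i}.card} ≤ Real.exp (m * (Real.exp c - 1) - c * a) := by
  have := hind.isProbabilityMeasure
  have hmeas : ∀ i, Measurable ((A i).indicator fun _ => (1 : ℝ)) :=
    fun i => measurable_const.indicator (hA i)
  have hcard : ∀ ω, ({i ∈ s | ω ∈ A i}.card : ℝ) = (∑ i ∈ s, (A i).indicator fun _ => 1) ω :=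
    fun ω => by simp [Finset.sum_apply, Set.indicator_apply]
  have hint : Integrable (fun ω => Real.exp (c * (∑ i ∈ s, (A i).indicator fun _ => 1) ω)) μ := by
    refine hind.iIndepFun_indicator.integrable_exp_mul_sum hmeas fun i _ => ?_
    simp_rw [exp_mul_indicator_one]
    exact ((integrable_const _).indicator (hA i)).add (integrable_const _)
  have hexp_c : 0 ≤ Real.exp c - 1 := by linarith [Real.one_le_exp hc]
  simp_rw [hcard]
  calc μ.real {ω | a ≤ (∑ i ∈ s, (A i).indicator fun _ => 1) ω}
      ≤ Real.exp (-c * a) * mgf (∑ i ∈ s, (A i).indicator fun _ => 1) μ c :=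
        measure_ge_le_exp_mul_mgf a hc hint
    _ = Real.exp (-c * a) * ∏ i ∈ s, (1 + μ.real (A i) * (Real.exp c - 1)) := by
        rw [hind.iIndepFun_indicator.mgf_sum hmeas]
        simp_rw [mgf_indicator_one (hA _)]
    _ ≤ Real.exp (-c * a) * ∏ i ∈ s, Real.exp (μ.real (A i) * (Real.exp c - 1)) := by
        gcongr with i
        linarith [Real.add_one_le_exp (μ.real (A i) * (Real.exp c - 1))]
    _ ≤ Real.exp (-c * a) * Real.exp (m * (Real.exp c - 1)) := by
        rw [← Real.exp_sum, ← Finset.sum_mul]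
        gcongr
    _ = Real.exp (m * (Real.exp c - 1) - c * a) := by
        rw [← Real.exp_add]
        ring_nf

end Probability

theorem Real.exp_le_one_add_add_sq {x : ℝ} (hx₀ : 0 ≤ x) (hx₁ : x ≤ 1) :
    Real.exp x ≤ 1 + x + 3 / 4 * x ^ 2 := by
  have := Real.exp_bound' hx₀ hx₁ (n := 2) two_pos
  norm_num [Finset.sum_range_succ] at this
  linarith

-- `c = log 2` works for `ρ ≤ 1/2` and `c = 1 - ρ` for `ρ ≥ 1/3`; no single choice serves all `ρ`.
theorem exists_chernoff_exponent {ρ : ℝ} (hρ₀ : 0 < ρ) (hρ₁ : ρ < 1) :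
    ∃ c, 0 ≤ c ∧ (ρ * (Real.exp c - 1) - c ≤ -(1 - ρ) / 4 ∨
      ρ * (Real.exp c - 1) - c ≤ -(1 - ρ) ^ 2 / (4 * ρ)) := by
  rcases le_or_gt ρ (1 / 2) with hρ | hρ
  · refine ⟨Real.log 2, (Real.log_pos one_lt_two).le, Or.inl ?_⟩
    rw [Real.exp_log two_pos]
    linarith [Real.log_two_gt_d9]
  · refine ⟨1 - ρ, by linarith, Or.inr ?_⟩
    have hexp := Real.exp_le_one_add_add_sq (x := 1 - ρ) (by linarith) (by linarith)
    rw [le_div_iff₀ (by positivity)]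
    nlinarith [mul_nonneg (sq_nonneg (1 - ρ)) (mul_nonneg (sub_nonneg.2 hρ₁.le)
      (by linarith : (0 : ℝ) ≤ 3 * ρ - 1))]

theorem exists_exp_chernoff_le {ρ a : ℝ} (hρ₀ : 0 < ρ) (hρ₁ : ρ < 1) (ha : 0 ≤ a) :
    ∃ c, 0 ≤ c ∧ Real.exp (ρ * a * (Real.exp c - 1) - c * a) ≤
      Real.exp (-((1 - ρ) * a) / 4) + Real.exp (-((1 - ρ) ^ 2 * a) / (4 * ρ)) := by
  obtain ⟨c, hc, hcase | hcase⟩ := exists_chernoff_exponent hρ₀ hρ₁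
  · refine ⟨c, hc, le_add_of_le_of_nonneg ?_ (Real.exp_pos _).le⟩
    gcongr
    calc ρ * a * (Real.exp c - 1) - c * a = a * (ρ * (Real.exp c - 1) - c) := by ring
      _ ≤ a * (-(1 - ρ) / 4) := by gcongr
      _ = -((1 - ρ) * a) / 4 := by ring
  · refine ⟨c, hc, le_add_of_nonneg_of_le (Real.exp_pos _).le ?_⟩
    gcongr
    calc ρ * a * (Real.exp c - 1) - c * a = a * (ρ * (Real.exp c - 1) - c) := by ring
      _ ≤ a * (-(1 - ρ) ^ 2 / (4 * ρ)) := by gcongr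
      _ = -((1 - ρ) ^ 2 * a) / (4 * ρ) := by ring

theorem measurable_dsm (θ x : H) : Measurable fun z : H => dsm θ z x := by
  unfold dsm
  fun_prop

section SmallBall

variable {X : ℕ → Ω → H} {x θ : H}

theorem phiSB_zero [IsProbabilityMeasure (ℙ : Measure Ω)] (hX : Measurable (X 0))
    (hφcont : Continuous (phiSB X x θ)) : phiSB X x θ 0 = 0 := by
  have hzero : {ω | dsm θ (X 0 ω) x ≤ 0} = {ω | dsm θ (X 0 ω) x = 0} := by
    ext ω
    simp [dsm]
  rw [phiSB, hzero, measure_eq_zero_of_continuous_cdf (f := fun ω => dsm θ (X 0 ω) x)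
    ((measurable_dsm θ x).comp hX) hφcont, ENNReal.toReal_zero]

theorem phiSB_phiInv_le [IsProbabilityMeasure (ℙ : Measure Ω)] (hX : Measurable (X 0))
    (hφcont : Continuous (phiSB X x θ)) {u : ℝ} (hu : 0 ≤ u) :
    phiSB X x θ (phiInv X x θ u) ≤ u :=
  apply_fInv_le hφcont ((phiSB_zero hX hφcont).trans_le hu)

theorem measure_dsm_eq_zero [IsProbabilityMeasure (ℙ : Measure Ω)]
    (hXmeas : ∀ i, Measurable (X i)) (hident : ∀ i, IdentDistrib (X i) (X 0) ℙ ℙ)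
    (hφcont : Continuous (phiSB X x θ)) (i : ℕ) (c : ℝ) :
    ℙ {ω | dsm θ (X i ω) x = c} = 0 := by
  rw [← measure_eq_zero_of_continuous_cdf ((measurable_dsm θ x).comp (hXmeas 0)) hφcont c]
  exact ((hident i).comp (measurable_dsm θ x)).measure_mem_eq (measurableSet_singleton c)

theorem ae_le_card_filter_of_HkNN_le (hXmeas : ∀ i, Measurable (X i)) (hindep : iIndepFun X ℙ)
    (hatom : ∀ i c, ℙ {ω | dsm θ (X i ω) x = c} = 0) {n k : ℕ} (hk : 1 ≤ k) (hkn : k ≤ n)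
    (t : ℝ) :
    ∀ᵐ ω, HkNN X x n k θ ω ≤ t → k ≤ {i ∈ Finset.range n | dsm θ (X i ω) x ≤ t}.card := by
  filter_upwards [(hindep.comp _ fun _ => measurable_dsm θ x).ae_injective
      (fun i => (measurable_dsm θ x).comp (hXmeas i)) hatom,
    ae_all_iff.2 fun i => measure_eq_zero_iff_ae_notMem.1 (hatom i 0)] with ω hinj hne hω
  exact Finset.le_card_filter_of_sInf_le (fun i _ => (abs_nonneg _).lt_of_ne' (hne i))
    hinj.injOn hk (by simpa using hkn) hω

theorem sum_measureReal_dsm_le (hident : ∀ i, IdentDistrib (X i) (X 0) ℙ ℙ) (n : ℕ)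
    {t u : ℝ} (hφ : phiSB X x θ t ≤ u) :
    ∑ i ∈ Finset.range n, (ℙ : Measure Ω).real {ω | dsm θ (X i ω) x ≤ t} ≤ n * u := by
  have hφ_eq : ∀ i, (ℙ : Measure Ω).real {ω | dsm θ (X i ω) x ≤ t} = phiSB X x θ t := fun i =>
    congrArg ENNReal.toReal ((hident i).measure_mem_eq (measurable_dsm θ x measurableSet_Iic))
  simp only [hφ_eq, Finset.sum_const, Finset.card_range, nsmul_eq_mul]
  gcongr

end SmallBall

/-- **Equation (exp1)**: lower tail bound for the kNN random bandwidth: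
`P(H_{k,x,θ} ≤ φ_{x,θ}^{-1}(ρ_n k_{1,n}/n)) ≤ exp(−(1−ρ_n)k_{1,n}/4) + exp(−(1−ρ_n)²k_{1,n}/(4ρ_n))`. -/
theorem eq_exp1_kNN_bandwidth_lower_tail
    [IsProbabilityMeasure (ℙ : Measure Ω)]
    (X : ℕ → Ω → H) (x θ : H) (n k k₁ k₂ : ℕ) (ρ : ℝ)
    -- i.i.d. sampling
    (hXmeas : ∀ i, Measurable (X i))
    (hindep : iIndepFun X ℙ)
    (hident : ∀ i, IdentDistrib (X i) (X 0) ℙ ℙ)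
    -- continuity of the small-ball probability function
    (hφcont : Continuous (phiSB X x θ))
    -- parameters
    (hρ : ρ ∈ Set.Ioo (0:ℝ) 1)
    (hk₁pos : 1 ≤ k₁) (hk₁k : k₁ ≤ k) (hkk₂ : k ≤ k₂) (hk₂n : k₂ ≤ n) :
    ℙ {ω | HkNN X x n k θ ω ≤ phiInv X x θ (ρ * (k₁ : ℝ) / n)} ≤
      ENNReal.ofReal (Real.exp (-((1 - ρ) * (k₁ : ℝ)) / 4) +
        Real.exp (-((1 - ρ) ^ 2 * (k₁ : ℝ)) / (4 * ρ))) := by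
  classical
  have hk : 1 ≤ k := hk₁pos.trans hk₁k
  have hkn : k ≤ n := hkk₂.trans hk₂n
  have hn : (n : ℝ) ≠ 0 := by norm_cast; omega
  set t := phiInv X x θ (ρ * k₁ / n)
  have hφt : phiSB X x θ t ≤ ρ * k₁ / n :=
    phiSB_phiInv_le (hXmeas 0) hφcont (by have := hρ.1; positivity)
  have hmean := (sum_measureReal_dsm_le hident n hφt).trans_eq (mul_div_cancel₀ _ hn)
  obtain ⟨c, hc, hexp⟩ := exists_exp_chernoff_le hρ.1 hρ.2 k₁.cast_nonneg
  have hchernoff := measureReal_le_card_filter_mem_le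
    (fun i => hXmeas i (measurable_dsm θ x measurableSet_Iic))
    (hindep.iIndepSet_preimage hXmeas (measurable_dsm θ x measurableSet_Iic)) _ (a := k₁) hc hmean
  have hcount := ae_le_card_filter_of_HkNN_le hXmeas hindep
    (measure_dsm_eq_zero hXmeas hident hφcont) hk hkn t
  calc ℙ {ω | HkNN X x n k θ ω ≤ t}
      ≤ ℙ {ω | (k₁ : ℝ) ≤ {i ∈ Finset.range n | dsm θ (X i ω) x ≤ t}.card} :=
        measure_mono_ae <| hcount.mono fun ω h hω => by exact_mod_cast hk₁k.trans (h hω)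
    _ = ENNReal.ofReal ((ℙ : Measure Ω).real _) := (ofReal_measureReal (measure_ne_top _ _)).symm
    _ ≤ _ := ENNReal.ofReal_le_ofReal (hchernoff.trans hexp)

end
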